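/- arXiv:2105.00621 — 2 statements merged into one kernel-verified Lean document; each statement's English description precedes it below -/
import Mathlib

section
/- Let G = (V, E; w) be a graph with strictly positive edge weights whose matching game Γ_G admits a PMAS. If distinct vertices 1, 2, 3, 4 induce a subgraph of G with edge set exactly {12, 23, 34} (an induced path P_4), then w_{23} ≥ w_{12} + w_{34}. -/
/-!
On the induced path `v1 - v2 - v3` monotonicity of the scheme gives
`γ {v1, v2, v3} ≥ γ {v1, v2} + x_{v2v3}(v3)`, and symmetrically
`γ {v2, v3, v4} ≥ γ {v3, v4} + x_{v2v3}(v2)`; adding, with efficiency on `{v2, v3}`,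
`γ {v1, v2, v3} + γ {v2, v3, v4} ≥ w₁₂ + w₂₃ + w₃₄`. A matching of an induced `P₃` has at most
one edge, so the left side is at most `max w₁₂ w₂₃ + max w₂₃ w₃₄`, and for positive weights this
forces `w₂₃ ≥ w₁₂ + w₃₄`.
-/

open Finset

/-- `M` is a matching of the induced subgraph `G[S]`, given as a finite set of
(ordered representatives of) edges with endpoints in `S`, pairwise vertex-disjoint. -/
def IsMatchingIn {V : Type*} (G : SimpleGraph V) (S : Finset V)
    (M : Finset (V × V)) : Prop :=
  (∀ p ∈ M, G.Adj p.1 p.2 ∧ p.1 ∈ S ∧ p.2 ∈ S) ∧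
  (∀ p ∈ M, ∀ q ∈ M, p ≠ q →
    p.1 ≠ q.1 ∧ p.1 ≠ q.2 ∧ p.2 ≠ q.1 ∧ p.2 ≠ q.2)

/-- `r` is the maximum total weight of a matching in the induced subgraph `G[S]`. -/
def IsMaxMatchingWeight {V : Type*} (G : SimpleGraph V)
    (w : V → V → ℝ) (S : Finset V) (r : ℝ) : Prop :=
  (∃ M : Finset (V × V), IsMatchingIn G S M ∧ ∑ p ∈ M, w p.1 p.2 = r) ∧
  (∀ M : Finset (V × V), IsMatchingIn G S M → ∑ p ∈ M, w p.1 p.2 ≤ r)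

/-- A population monotonic allocation scheme (PMAS): `x S i` is the payoff of player `i`
in coalition `S`.  Efficiency holds for every nonempty coalition, and every player's
payoff is monotone under coalition inclusion. -/
def IsPMAS {N : Type*} [DecidableEq N] (γ : Finset N → ℝ)
    (x : Finset N → N → ℝ) : Prop :=
  (∀ S : Finset N, S.Nonempty → ∑ i ∈ S, x S i = γ S) ∧
  (∀ S T : Finset N, S ⊆ T → ∀ i ∈ S, x S i ≤ x T i)

lemma add_le_of_add_add_le_max_add_max {a b c : ℝ} (ha : 0 < a) (hb : 0 < b) (hc : 0 < c)
    (h : a + b + c ≤ max a b + max b c) : a + c ≤ b := by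
  rcases max_cases a b with ⟨hab, -⟩ | ⟨hab, -⟩ <;>
    rcases max_cases b c with ⟨hbc, -⟩ | ⟨hbc, -⟩ <;> linarith

lemma IsPMAS.add_le_of_insert {N : Type*} [DecidableEq N] {γ : Finset N → ℝ}
    {x : Finset N → N → ℝ} (hx : IsPMAS γ x) {S T : Finset N} {k : N} (hS : S.Nonempty)
    (hk : k ∉ S) (hkT : k ∈ T) (hT : T ⊆ insert k S) :
    γ S + x T k ≤ γ (insert k S) := by
  obtain ⟨heff, hmono⟩ := hx
  have hsum : ∑ i ∈ S, x S i ≤ ∑ i ∈ S, x (insert k S) i :=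
    sum_le_sum fun i hi => hmono _ _ (subset_insert k S) i hi
  have hkk : x T k ≤ x (insert k S) k := hmono _ _ hT k hkT
  rw [← heff S hS, ← heff _ (insert_nonempty k S), sum_insert hk]
  linarith

section Matching

variable {V : Type*} {G : SimpleGraph V} {w : V → V → ℝ} {S : Finset V}

lemma IsMatchingIn.card_le_one_of_forall_mem {M : Finset (V × V)} (hM : IsMatchingIn G S M)
    {b : V} (hb : ∀ p ∈ M, p.1 = b ∨ p.2 = b) : #M ≤ 1 := by
  refine card_le_one.2 fun p hp q hq => ?_
  by_contra hpq
  have := hM.2 p hp q hq hpq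
  rcases hb p hp with h | h <;> rcases hb q hq with h' | h' <;> simp_all

lemma IsMaxMatchingWeight.weight_le {r : ℝ} (h : IsMaxMatchingWeight G w S r) {a b : V}
    (hab : G.Adj a b) (ha : a ∈ S) (hb : b ∈ S) : w a b ≤ r := by
  have hM : IsMatchingIn G S {(a, b)} :=
    ⟨by simp [hab, ha, hb], fun p hp q hq hpq => absurd ((mem_singleton.1 hp).trans
      (mem_singleton.1 hq).symm) hpq⟩
  simpa using h.2 _ hM

lemma IsMaxMatchingWeight.le_of_forall_adj {r m : ℝ} (h : IsMaxMatchingWeight G w S r)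
    (hm : 0 ≤ m) {b : V}
    (hstar : ∀ u ∈ S, ∀ v ∈ S, G.Adj u v → (u = b ∨ v = b) ∧ w u v ≤ m) : r ≤ m := by
  obtain ⟨⟨M, hM, rfl⟩, -⟩ := h
  have hedge : ∀ p ∈ M, (p.1 = b ∨ p.2 = b) ∧ w p.1 p.2 ≤ m := fun p hp =>
    have ⟨hadj, h1, h2⟩ := hM.1 p hp
    hstar _ h1 _ h2 hadj
  calc ∑ p ∈ M, w p.1 p.2 ≤ #M • m := sum_le_card_nsmul _ _ _ fun p hp => (hedge p hp).2
    _ ≤ 1 • m := nsmul_le_nsmul_left hm (hM.card_le_one_of_forall_mem fun p hp => (hedge p hp).1)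
    _ = m := one_nsmul m

lemma IsMaxMatchingWeight.le_max_of_path [DecidableEq V] {r : ℝ}
    (hsym : ∀ a b : V, w a b = w b a) {a b c : V}
    (h : IsMaxMatchingWeight G w {a, b, c} r) (hab : G.Adj a b) (hbc : G.Adj b c)
    (hac : ¬ G.Adj a c) (hw : 0 ≤ w a b) : r ≤ max (w a b) (w b c) := by
  refine h.le_of_forall_adj (le_max_of_le_left hw) (b := b) fun u hu v hv huv => ?_
  have hba := hsym b a
  have hcb := hsym c b
  have hca : ¬ G.Adj c a := fun h => hac h.symm
  clear hsym
  simp only [mem_insert, mem_singleton] at hu hv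
  rcases hu with rfl | rfl | rfl <;> rcases hv with rfl | rfl | rfl <;> simp_all

end Matching

theorem matchingGame_P4_property_general {V : Type*} [DecidableEq V]
    (G : SimpleGraph V) (w : V → V → ℝ)
    (hsym : ∀ a b : V, w a b = w b a)
    (hpos : ∀ a b : V, G.Adj a b → 0 < w a b)
    (γ : Finset V → ℝ)
    (hγ : ∀ S : Finset V, IsMaxMatchingWeight G w S (γ S))
    (hpmas : ∃ x : Finset V → V → ℝ, IsPMAS γ x)
    (v1 v2 v3 v4 : V)
    (hne13 : v1 ≠ v3)
    (hne23 : v2 ≠ v3) (hne24 : v2 ≠ v4)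
    (h12 : G.Adj v1 v2) (h23 : G.Adj v2 v3) (h34 : G.Adj v3 v4)
    (hn13 : ¬ G.Adj v1 v3) (hn24 : ¬ G.Adj v2 v4) :
    w v2 v3 ≥ w v1 v2 + w v3 v4 := by
  obtain ⟨x, hx⟩ := hpmas
  have hleft : γ {v1, v2} + x {v2, v3} v3 ≤ γ {v1, v2, v3} := by
    have := hx.add_le_of_insert (insert_nonempty v1 {v2}) (k := v3) (T := {v2, v3})
      (by simp [hne13.symm, hne23.symm]) (by simp) (by simp [insert_subset_iff])
    rwa [show insert v3 {v1, v2} = ({v1, v2, v3} : Finset V) by ext; simp; tauto] at this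
  have hright : γ {v3, v4} + x {v2, v3} v2 ≤ γ {v2, v3, v4} :=
    hx.add_le_of_insert (insert_nonempty v3 {v4}) (by simp [hne23, hne24]) (by simp)
      (by simp [insert_subset_iff])
  have hmid : x {v2, v3} v2 + x {v2, v3} v3 = γ {v2, v3} := by
    rw [← sum_pair hne23]; exact hx.1 _ (insert_nonempty v2 {v3})
  have w12 := (hγ {v1, v2}).weight_le h12 (by simp) (by simp)
  have w23 := (hγ {v2, v3}).weight_le h23 (by simp) (by simp)
  have w34 := (hγ {v3, v4}).weight_le h34 (by simp) (by simp)
  have p123 := (hγ {v1, v2, v3}).le_max_of_path hsym h12 h23 hn13 (hpos _ _ h12).le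
  have p234 := (hγ {v2, v3, v4}).le_max_of_path hsym h23 h34 hn24 (hpos _ _ h23).le
  exact add_le_of_add_add_le_max_add_max (hpos _ _ h12) (hpos _ _ h23) (hpos _ _ h34)
    (by linarith)

/-- P₄-property (Lemma 3.3). -/
theorem matchingGame_P4_property {V : Type*} [Fintype V] [DecidableEq V]
    (G : SimpleGraph V) (w : V → V → ℝ)
    (hsym : ∀ a b : V, w a b = w b a)
    (hpos : ∀ a b : V, G.Adj a b → 0 < w a b)
    (γ : Finset V → ℝ)
    (hγ : ∀ S : Finset V, IsMaxMatchingWeight G w S (γ S))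
    (hpmas : ∃ x : Finset V → V → ℝ, IsPMAS γ x)
    (v1 v2 v3 v4 : V)
    (hne12 : v1 ≠ v2) (hne13 : v1 ≠ v3) (hne14 : v1 ≠ v4)
    (hne23 : v2 ≠ v3) (hne24 : v2 ≠ v4) (hne34 : v3 ≠ v4)
    (h12 : G.Adj v1 v2) (h23 : G.Adj v2 v3) (h34 : G.Adj v3 v4)
    (hn13 : ¬ G.Adj v1 v3) (hn14 : ¬ G.Adj v1 v4) (hn24 : ¬ G.Adj v2 v4) :
    w v2 v3 ≥ w v1 v2 + w v3 v4 :=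
  matchingGame_P4_property_general G w hsym hpos γ hγ hpmas v1 v2 v3 v4 hne13 hne23 hne24 h12 h23
    h34 hn13 hn24
end

section
/- Let G = (V, E; w) be a graph with strictly positive edge weights. If the matching game Γ_G admits a PMAS, then G contains no clique on 4 vertices, i.e., there do not exist distinct vertices 1, 2, 3, 4 that are pairwise adjacent in G. -/
open Finset

/-!
If `ab` is a heaviest edge of a `K₄` on `a, b, c, d`, the value of each triangle through `ab`
is `w a b`, which `a` and `b` already earn there, so the third vertex gets nothing. By
monotonicity `a` then earns at least `max (w a c) (w a d) > 0` in `{a, c, d}`, and likewise `b`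
in `{b, c, d}`; as a triangle is worth its heaviest edge, `c` and `d` together get strictly less
than `w c d` in each of these two triangles. Monotonicity from the coalition `{c, d}`, applied
crosswise, gives `2 w c d ≤ x_{acd} c + x_{bcd} d + x_{bcd} c + x_{acd} d`, a contradiction.
-/

section Matching

variable {V : Type*} {G : SimpleGraph V} {w : V → V → ℝ} {S : Finset V} {r : ℝ}

theorem IsMatchingIn.two_mul_card_le [DecidableEq V] {M : Finset (V × V)}
    (hM : IsMatchingIn G S M) : 2 * M.card ≤ S.card := by
  have hdisj : (M : Set (V × V)).PairwiseDisjoint fun p => ({p.1, p.2} : Finset V) := by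
    intro p hp q hq hpq
    obtain ⟨h11, h12, h21, h22⟩ := hM.2 p hp q hq hpq
    simp [h11.symm, h12.symm, h21.symm, h22.symm]
  calc 2 * M.card = ∑ p ∈ M, ({p.1, p.2} : Finset V).card := by
        rw [sum_congr rfl fun p hp => card_pair (G.ne_of_adj (hM.1 p hp).1),
          sum_const, smul_eq_mul, mul_comm]
    _ = (M.biUnion fun p => ({p.1, p.2} : Finset V)).card := (card_biUnion hdisj).symm
    _ ≤ S.card := card_le_card <| biUnion_subset.mpr fun p hp => by
        simp [insert_subset_iff, (hM.1 p hp).2]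

theorem IsMaxMatchingWeight.le_of_adj [DecidableEq V] (hr : IsMaxMatchingWeight G w S r)
    {a b : V} (hab : G.Adj a b) (hS : {a, b} ⊆ S) : w a b ≤ r := by
  have hM : IsMatchingIn G S {(a, b)} :=
    ⟨by simpa [hab] using insert_subset_iff.mp hS, by simp +contextual⟩
  simpa using hr.2 _ hM

theorem IsMaxMatchingWeight.le_of_card_le_three [DecidableEq V]
    (hr : IsMaxMatchingWeight G w S r) (hS : S.card ≤ 3) {C : ℝ} (hC : 0 ≤ C)
    (hw : ∀ a ∈ S, ∀ b ∈ S, G.Adj a b → w a b ≤ C) : r ≤ C := by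
  obtain ⟨⟨M, hM, rfl⟩, -⟩ := hr
  have hcard : M.card ≤ 1 := by have := hM.two_mul_card_le; omega
  calc ∑ p ∈ M, w p.1 p.2 ≤ M.card • C :=
        sum_le_card_nsmul _ _ _ fun p hp => hw _ (hM.1 p hp).2.1 _ (hM.1 p hp).2.2 (hM.1 p hp).1
    _ ≤ C := by rw [nsmul_eq_mul]; exact mul_le_of_le_one_left hC (by exact_mod_cast hcard)

end Matching

namespace IsPMAS

variable {N : Type*} [DecidableEq N] {γ : Finset N → ℝ} {x : Finset N → N → ℝ}

theorem pair_le_add (hx : IsPMAS γ x) {a b : N} (hab : a ≠ b) {S S' : Finset N}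
    (hS : {a, b} ⊆ S) (hS' : {a, b} ⊆ S') : γ {a, b} ≤ x S a + x S' b := by
  have hsum := hx.1 {a, b} (insert_nonempty a {b})
  rw [sum_pair hab] at hsum
  have ha := hx.2 _ _ hS a (by simp)
  have hb := hx.2 _ _ hS' b (by simp)
  linarith

theorem sum_triple (hx : IsPMAS γ x) {a b c : N} (hab : a ≠ b) (hac : a ≠ c) (hbc : b ≠ c) :
    x {a, b, c} a + x {a, b, c} b + x {a, b, c} c = γ {a, b, c} := by
  rw [← hx.1 _ (insert_nonempty a {b, c}), sum_insert (by simp [hab, hac]),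
    sum_pair hbc, add_assoc]

end IsPMAS

section MatchingGame

variable {V : Type*} [DecidableEq V] {G : SimpleGraph V} {w : V → V → ℝ}
  {γ : Finset V → ℝ} {x : Finset V → V → ℝ}
  (hγ : ∀ S : Finset V, IsMaxMatchingWeight G w S (γ S)) (hx : IsPMAS γ x)
include hγ hx

theorem matchingGame_weight_le_add {a b : V} (hab : G.Adj a b) {S S' : Finset V}
    (hS : {a, b} ⊆ S) (hS' : {a, b} ⊆ S') : w a b ≤ x S a + x S' b :=
  ((hγ _).le_of_adj hab subset_rfl).trans (hx.pair_le_add hab.ne hS hS')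

omit hx in
theorem matchingGame_triangle_le_max (hsym : ∀ a b : V, w a b = w b a)
    (hpos : ∀ a b : V, G.Adj a b → 0 < w a b) {a b c : V} (hab : G.Adj a b) :
    γ {a, b, c} ≤ max (max (w a b) (w a c)) (w b c) := by
  refine (hγ _).le_of_card_le_three card_le_three ((hpos a b hab).le.trans ?_) ?_
  · exact (le_max_left _ _).trans (le_max_left _ _)
  · intro u hu v hv huv
    simp only [mem_insert, mem_singleton] at hu hv
    rcases hu with rfl | rfl | rfl <;> rcases hv with rfl | rfl | rfl <;>
      simp_all

variable (hsym : ∀ a b : V, w a b = w b a) (hpos : ∀ a b : V, G.Adj a b → 0 < w a b)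
include hsym hpos

theorem matchingGame_pmas_nonpos_of_heaviest {a b c : V} (hab : G.Adj a b) (hac : G.Adj a c)
    (hbc : G.Adj b c) (hac_le : w a c ≤ w a b) (hbc_le : w b c ≤ w a b) :
    x {a, b, c} c ≤ 0 := by
  have hγabc : γ {a, b, c} ≤ w a b :=
    (matchingGame_triangle_le_max hγ hsym hpos hab).trans (by simp [hac_le, hbc_le])
  have hpair := matchingGame_weight_le_add hγ hx hab (S := {a, b, c}) (S' := {a, b, c})
    (by simp [insert_subset_iff]) (by simp [insert_subset_iff])
  linarith [hx.sum_triple hab.ne hac.ne hbc.ne]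

theorem matchingGame_pmas_add_lt_weight {a c d : V} (hac : G.Adj a c) (had : G.Adj a d)
    (hcd : G.Adj c d) (ha : max (w a c) (w a d) ≤ x {a, c, d} a) :
    x {a, c, d} c + x {a, c, d} d < w c d := by
  have hsum := hx.sum_triple hac.ne had.ne hcd.ne
  rcases le_max_iff.mp (matchingGame_triangle_le_max hγ hsym hpos hac (c := d)) with h | h
  · linarith [hpos c d hcd]
  · linarith [hpos a c hac, le_max_left (w a c) (w a d)]

theorem matchingGame_false_of_heaviest_edge {a b c d : V} (hab : G.Adj a b) (hac : G.Adj a c)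
    (had : G.Adj a d) (hbc : G.Adj b c) (hbd : G.Adj b d) (hcd : G.Adj c d)
    (hac_le : w a c ≤ w a b) (had_le : w a d ≤ w a b) (hbc_le : w b c ≤ w a b)
    (hbd_le : w b d ≤ w a b) : False := by
  have hc := matchingGame_pmas_nonpos_of_heaviest hγ hx hsym hpos hab hac hbc hac_le hbc_le
  have hd := matchingGame_pmas_nonpos_of_heaviest hγ hx hsym hpos hab had hbd had_le hbd_le
  have hweight {u v : V} (huv : G.Adj u v) (S S' : Finset V)
      (hS : {u, v} ⊆ S := by simp [insert_subset_iff])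
      (hS' : {u, v} ⊆ S' := by simp [insert_subset_iff]) :=
    matchingGame_weight_le_add hγ hx huv hS hS'
  have ha : max (w a c) (w a d) ≤ x {a, c, d} a := max_le
    (by linarith [hweight hac {a, c, d} {a, b, c}])
    (by linarith [hweight had {a, c, d} {a, b, d}])
  have hb : max (w b c) (w b d) ≤ x {b, c, d} b := max_le
    (by linarith [hweight hbc {b, c, d} {a, b, c}])
    (by linarith [hweight hbd {b, c, d} {a, b, d}])
  linarith [hweight hcd {a, c, d} {b, c, d}, hweight hcd {b, c, d} {a, c, d},
    matchingGame_pmas_add_lt_weight hγ hx hsym hpos hac had hcd ha,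
    matchingGame_pmas_add_lt_weight hγ hx hsym hpos hbc hbd hcd hb]

theorem matchingGame_cliqueFree_four : G.CliqueFree 4 := by
  intro s hs
  have hadj : ∀ u ∈ s, ∀ v ∈ s, u ≠ v → G.Adj u v := fun u hu v hv => hs.isClique hu hv
  obtain ⟨⟨a, b⟩, hab, hmax⟩ := s.offDiag.exists_max_image (fun p => w p.1 p.2)
    (card_pos.mp (by rw [offDiag_card, hs.card_eq]; norm_num))
  obtain ⟨ha, hb, hne⟩ := mem_offDiag.mp hab
  have hle : ∀ u ∈ s, ∀ v ∈ s, u ≠ v → w u v ≤ w a b :=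
    fun u hu v hv huv => hmax (u, v) (mem_offDiag.mpr ⟨hu, hv, huv⟩)
  obtain ⟨c, d, hcd, hrest⟩ : ∃ c d, c ≠ d ∧ s \ {a, b} = {c, d} := card_eq_two.mp <| by
    rw [card_sdiff_of_subset (by simp [insert_subset_iff, ha, hb]), hs.card_eq, card_pair hne]
  have hc : c ∈ s \ {a, b} := hrest ▸ mem_insert_self c {d}
  have hd : d ∈ s \ {a, b} := hrest ▸ mem_insert_of_mem (mem_singleton_self d)
  simp only [mem_sdiff, mem_insert, mem_singleton, not_or] at hc hd
  exact matchingGame_false_of_heaviest_edge hγ hx hsym hpos (hadj a ha b hb hne)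
    (hadj a ha c hc.1 (Ne.symm hc.2.1)) (hadj a ha d hd.1 (Ne.symm hd.2.1))
    (hadj b hb c hc.1 (Ne.symm hc.2.2)) (hadj b hb d hd.1 (Ne.symm hd.2.2))
    (hadj c hc.1 d hd.1 hcd) (hle a ha c hc.1 (Ne.symm hc.2.1)) (hle a ha d hd.1 (Ne.symm hd.2.1))
    (hle b hb c hc.1 (Ne.symm hc.2.2)) (hle b hb d hd.1 (Ne.symm hd.2.2))

end MatchingGame

theorem matchingGame_K4_free_general {V : Type*} [DecidableEq V]
    (G : SimpleGraph V) (w : V → V → ℝ)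
    (hsym : ∀ a b : V, w a b = w b a)
    (hpos : ∀ a b : V, G.Adj a b → 0 < w a b)
    (γ : Finset V → ℝ)
    (hγ : ∀ S : Finset V, IsMaxMatchingWeight G w S (γ S))
    (hpmas : ∃ x : Finset V → V → ℝ, IsPMAS γ x) :
    ¬ ∃ v1 v2 v3 v4 : V,
      v1 ≠ v2 ∧ v1 ≠ v3 ∧ v1 ≠ v4 ∧ v2 ≠ v3 ∧ v2 ≠ v4 ∧ v3 ≠ v4 ∧
      G.Adj v1 v2 ∧ G.Adj v1 v3 ∧ G.Adj v1 v4 ∧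
      G.Adj v2 v3 ∧ G.Adj v2 v4 ∧ G.Adj v3 v4 := by
  rintro ⟨v1, v2, v3, v4, -, -, -, -, -, -, h12, h13, h14, h23, h24, h34⟩
  obtain ⟨x, hx⟩ := hpmas
  exact matchingGame_cliqueFree_four hγ hx hsym hpos _
    ((G.is3Clique_triple_iff.mpr ⟨h23, h24, h34⟩).insert (a := v1) (by simp [h12, h13, h14]))

/-- K₄-freeness (Lemma 3.7). -/
theorem matchingGame_K4_free {V : Type*} [Fintype V] [DecidableEq V]
    (G : SimpleGraph V) (w : V → V → ℝ)
    (hsym : ∀ a b : V, w a b = w b a)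
    (hpos : ∀ a b : V, G.Adj a b → 0 < w a b)
    (γ : Finset V → ℝ)
    (hγ : ∀ S : Finset V, IsMaxMatchingWeight G w S (γ S))
    (hpmas : ∃ x : Finset V → V → ℝ, IsPMAS γ x) :
    ¬ ∃ v1 v2 v3 v4 : V,
      v1 ≠ v2 ∧ v1 ≠ v3 ∧ v1 ≠ v4 ∧ v2 ≠ v3 ∧ v2 ≠ v4 ∧ v3 ≠ v4 ∧
      G.Adj v1 v2 ∧ G.Adj v1 v3 ∧ G.Adj v1 v4 ∧
      G.Adj v2 v3 ∧ G.Adj v2 v4 ∧ G.Adj v3 v4 :=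
  matchingGame_K4_free_general G w hsym hpos γ hγ hpmas
end
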